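/- Let a > b > 0 and let γ = α × β. The function G = (α₁ω₁ + α₂ω₂ + ½α₃ω₃)² + (β₁ω₁ + β₂ω₂ + ½β₃ω₃)² + ω₃(γ₁ω₁ + γ₂ω₂ + ½γ₃ω₃) − α₁b² − β₂a² has vanishing directional derivative along the vector field of the Kowalevski two-field equations at every point of ℝ⁹ satisfying the geometric constraints |α|² = a², |β|² = b², α·β = 0. Consequently G is constant along every solution lying on this constraint set. -/

import Mathlib

noncomputable section

/-- Euclidean dot product on ℝ³ (represented as `ℝ × ℝ × ℝ`). -/
def dot3 (u v : ℝ × ℝ × ℝ) : ℝ := u.1 * v.1 + u.2.1 * v.2.1 + u.2.2 * v.2.2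

/-- Cross product on ℝ³ (represented as `ℝ × ℝ × ℝ`). -/
def cross3 (u v : ℝ × ℝ × ℝ) : ℝ × ℝ × ℝ :=
  (u.2.1 * v.2.2 - u.2.2 * v.2.1,
   u.2.2 * v.1 - u.1 * v.2.2,
   u.1 * v.2.1 - u.2.1 * v.1)

/-- The vector field of the Kowalevski two-field equations on ℝ⁹ = ℝ³ × ℝ³ × ℝ³,
with coordinates `(ω, α, β)`. -/
def kowField (v : (ℝ × ℝ × ℝ) × (ℝ × ℝ × ℝ) × (ℝ × ℝ × ℝ)) :
    (ℝ × ℝ × ℝ) × (ℝ × ℝ × ℝ) × (ℝ × ℝ × ℝ) :=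
  (((v.1.2.1 * v.1.2.2 + v.2.2.2.2) / 2,
    (-(v.1.1 * v.1.2.2) - v.2.1.2.2) / 2,
    v.2.1.2.1 - v.2.2.1),
   cross3 v.2.1 v.1,
   cross3 v.2.2 v.1)

/-- The integral `G` (with `γ = α × β`):
`G = (α·ω½)² + (β·ω½)² + ω₃(γ₁ω₁ + γ₂ω₂ + ½γ₃ω₃) − α₁b² − β₂a²`. -/
def Gfun (a b : ℝ) (v : (ℝ × ℝ × ℝ) × (ℝ × ℝ × ℝ) × (ℝ × ℝ × ℝ)) : ℝ :=
  (v.2.1.1 * v.1.1 + v.2.1.2.1 * v.1.2.1 + (1 / 2) * v.2.1.2.2 * v.1.2.2) ^ 2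
    + (v.2.2.1 * v.1.1 + v.2.2.2.1 * v.1.2.1 + (1 / 2) * v.2.2.2.2 * v.1.2.2) ^ 2
    + v.1.2.2 * ((cross3 v.2.1 v.2.2).1 * v.1.1 + (cross3 v.2.1 v.2.2).2.1 * v.1.2.1
        + (1 / 2) * (cross3 v.2.1 v.2.2).2.2 * v.1.2.2)
    - v.2.1.1 * b ^ 2 - v.2.2.2.1 * a ^ 2

/-- A solution of the Kowalevski two-field equations, by components. -/
def KowSol (ω1 ω2 ω3 a1 a2 a3 b1 b2 b3 : ℝ → ℝ) : Prop :=
  (∀ t, HasDerivAt ω1 ((ω2 t * ω3 t + b3 t) / 2) t) ∧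
  (∀ t, HasDerivAt ω2 ((-(ω1 t * ω3 t) - a3 t) / 2) t) ∧
  (∀ t, HasDerivAt ω3 (a2 t - b1 t) t) ∧
  (∀ t, HasDerivAt a1 (a2 t * ω3 t - a3 t * ω2 t) t) ∧
  (∀ t, HasDerivAt a2 (a3 t * ω1 t - a1 t * ω3 t) t) ∧
  (∀ t, HasDerivAt a3 (a1 t * ω2 t - a2 t * ω1 t) t) ∧
  (∀ t, HasDerivAt b1 (b2 t * ω3 t - b3 t * ω2 t) t) ∧
  (∀ t, HasDerivAt b2 (b3 t * ω1 t - b1 t * ω3 t) t) ∧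
  (∀ t, HasDerivAt b3 (b1 t * ω2 t - b2 t * ω1 t) t)


/-!
`G` is a polynomial in the bilinear forms `α · Dω`, `β · Dω`, `γ · Dω` with `D = diag(1, 1, 1/2)`,
so the product rule gives its derivative in any direction. In the direction of the Kowalevski
field this derivative is a polynomial combination of the constraint functions `|α|² - a²`,
`|β|² - b²` and `α · β`, hence vanishes on the constraint set. A solution is a curve whose
velocity is the Kowalevski field, so `G` has zero derivative along it and is constant.
-/

local notation "ℝ³" => ℝ × ℝ × ℝ

/-- The bilinear form `u · D v` with `D = diag(1, 1, 1/2)`, in which `G` is written. -/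
def halfDot (u v : ℝ³) : ℝ := u.1 * v.1 + u.2.1 * v.2.1 + 1 / 2 * u.2.2 * v.2.2

theorem Gfun_eq (a b : ℝ) (v : ℝ³ × ℝ³ × ℝ³) :
    Gfun a b v = halfDot v.2.1 v.1 ^ 2 + halfDot v.2.2 v.1 ^ 2
      + v.1.2.2 * halfDot (cross3 v.2.1 v.2.2) v.1 - v.2.1.1 * b ^ 2 - v.2.2.2.1 * a ^ 2 :=
  rfl

section Curves

variable {E F : Type*} [NormedAddCommGroup E] [NormedSpace ℝ E] [NormedAddCommGroup F]
  [NormedSpace ℝ F] {t : ℝ}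

theorem HasDerivAt.fst {f : ℝ → E × F} {f' : E × F} (h : HasDerivAt f f' t) :
    HasDerivAt (fun s => (f s).1) f'.1 t :=
  (hasFDerivAt_fst (p := f t)).comp_hasDerivAt (f := f) t h

theorem HasDerivAt.snd {f : ℝ → E × F} {f' : E × F} (h : HasDerivAt f f' t) :
    HasDerivAt (fun s => (f s).2) f'.2 t :=
  (hasFDerivAt_snd (p := f t)).comp_hasDerivAt (f := f) t h

variable {u v : ℝ → ℝ³} {u' v' : ℝ³}

theorem HasDerivAt.halfDot (hu : HasDerivAt u u' t) (hv : HasDerivAt v v' t) :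
    HasDerivAt (fun s => halfDot (u s) (v s)) (halfDot u' (v t) + halfDot (u t) v') t := by
  refine (((hu.fst.mul hv.fst).add (hu.snd.fst.mul hv.snd.fst)).add
    ((hu.snd.snd.const_mul (1 / 2 : ℝ)).mul hv.snd.snd)).congr_deriv ?_
  simp only [_root_.halfDot]
  ring

theorem HasDerivAt.cross3 (hu : HasDerivAt u u' t) (hv : HasDerivAt v v' t) :
    HasDerivAt (fun s => cross3 (u s) (v s)) (cross3 u' (v t) + cross3 (u t) v') t := by
  refine (((hu.snd.fst.mul hv.snd.snd).sub (hu.snd.snd.mul hv.snd.fst)).prodMk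
    (((hu.snd.snd.mul hv.fst).sub (hu.fst.mul hv.snd.snd)).prodMk
      ((hu.fst.mul hv.snd.fst).sub (hu.snd.fst.mul hv.fst)))).congr_deriv ?_
  simp only [_root_.cross3, Prod.mk_add_mk, Prod.mk.injEq]
  exact ⟨by ring, by ring, by ring⟩

end Curves

def GfunDeriv (a b : ℝ) (v w : ℝ³ × ℝ³ × ℝ³) : ℝ :=
  2 * halfDot v.2.1 v.1 * (halfDot w.2.1 v.1 + halfDot v.2.1 w.1)
    + 2 * halfDot v.2.2 v.1 * (halfDot w.2.2 v.1 + halfDot v.2.2 w.1)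
    + w.1.2.2 * halfDot (cross3 v.2.1 v.2.2) v.1
    + v.1.2.2 * (halfDot (cross3 w.2.1 v.2.2 + cross3 v.2.1 w.2.2) v.1
      + halfDot (cross3 v.2.1 v.2.2) w.1)
    - w.2.1.1 * b ^ 2 - w.2.2.2.1 * a ^ 2

theorem hasDerivAt_Gfun_comp (a b : ℝ) {γ : ℝ → ℝ³ × ℝ³ × ℝ³} {γ' : ℝ³ × ℝ³ × ℝ³} {t : ℝ}
    (hγ : HasDerivAt γ γ' t) :
    HasDerivAt (fun s => Gfun a b (γ s)) (GfunDeriv a b (γ t) γ') t := by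
  have hω := hγ.fst
  have hα := hγ.snd.fst
  have hβ := hγ.snd.snd
  simp only [Gfun_eq]
  refine ((((((hα.halfDot hω).fun_pow 2).fun_add ((hβ.halfDot hω).fun_pow 2)).fun_add
    (hω.snd.snd.fun_mul ((hα.cross3 hβ).halfDot hω))).fun_sub (hα.fst.mul_const (b ^ 2))).fun_sub
      (hβ.snd.fst.mul_const (a ^ 2))).congr_deriv ?_
  simp only [GfunDeriv]
  ring

theorem differentiable_Gfun (a b : ℝ) : Differentiable ℝ (Gfun a b) := by
  unfold Gfun cross3
  fun_prop

theorem fderiv_Gfun_apply (a b : ℝ) (v w : ℝ³ × ℝ³ × ℝ³) :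
    fderiv ℝ (Gfun a b) v w = GfunDeriv a b v w := by
  have hline : HasDerivAt (fun s : ℝ => v + s • w) w 0 := by
    simpa using ((hasDerivAt_id (0 : ℝ)).smul_const w).const_add v
  have hG : HasLineDerivAt ℝ (Gfun a b) (GfunDeriv a b v w) v w := by
    unfold HasLineDerivAt
    simpa using hasDerivAt_Gfun_comp a b hline
  rw [← (differentiable_Gfun a b v).lineDeriv_eq_fderiv, hG.lineDeriv]

theorem GfunDeriv_kowField (a b : ℝ) (v : ℝ³ × ℝ³ × ℝ³) :
    GfunDeriv a b v (kowField v) =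
      (v.1.1 * v.2.2.2.2 - v.1.2.2 * v.2.2.1) * (dot3 v.2.1 v.2.1 - a ^ 2)
        + (v.1.2.2 * v.2.1.2.1 - v.1.2.1 * v.2.1.2.2) * (dot3 v.2.2 v.2.2 - b ^ 2)
        + (v.1.2.2 * v.2.1.1 - v.1.2.2 * v.2.2.2.1 + v.1.2.1 * v.2.2.2.2 - v.1.1 * v.2.1.2.2)
          * dot3 v.2.1 v.2.2 := by
  simp only [GfunDeriv, kowField, halfDot, cross3, dot3, Prod.fst_add, Prod.snd_add]
  ring

theorem GfunDeriv_kowField_eq_zero {a b : ℝ} {v : ℝ³ × ℝ³ × ℝ³}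
    (hα : dot3 v.2.1 v.2.1 = a ^ 2) (hβ : dot3 v.2.2 v.2.2 = b ^ 2) (hαβ : dot3 v.2.1 v.2.2 = 0) :
    GfunDeriv a b v (kowField v) = 0 := by
  rw [GfunDeriv_kowField, hα, hβ, hαβ]
  ring

theorem KowSol.hasDerivAt {ω1 ω2 ω3 a1 a2 a3 b1 b2 b3 : ℝ → ℝ}
    (h : KowSol ω1 ω2 ω3 a1 a2 a3 b1 b2 b3) (t : ℝ) :
    HasDerivAt (fun s => ((ω1 s, ω2 s, ω3 s), (a1 s, a2 s, a3 s), (b1 s, b2 s, b3 s)))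
      (kowField ((ω1 t, ω2 t, ω3 t), (a1 t, a2 t, a3 t), (b1 t, b2 t, b3 t))) t := by
  obtain ⟨hω1, hω2, hω3, ha1, ha2, ha3, hb1, hb2, hb3⟩ := h
  exact ((hω1 t).prodMk ((hω2 t).prodMk (hω3 t))).prodMk
    (((ha1 t).prodMk ((ha2 t).prodMk (ha3 t))).prodMk ((hb1 t).prodMk ((hb2 t).prodMk (hb3 t))))

theorem G_first_integral_on_constraints_general (a b : ℝ) :
    (∀ v : (ℝ × ℝ × ℝ) × (ℝ × ℝ × ℝ) × (ℝ × ℝ × ℝ),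
      dot3 v.2.1 v.2.1 = a ^ 2 → dot3 v.2.2 v.2.2 = b ^ 2 → dot3 v.2.1 v.2.2 = 0 →
      fderiv ℝ (Gfun a b) v (kowField v) = 0) ∧
    (∀ ω1 ω2 ω3 a1 a2 a3 b1 b2 b3 : ℝ → ℝ,
      KowSol ω1 ω2 ω3 a1 a2 a3 b1 b2 b3 →
      (∀ t, a1 t ^ 2 + a2 t ^ 2 + a3 t ^ 2 = a ^ 2) →
      (∀ t, b1 t ^ 2 + b2 t ^ 2 + b3 t ^ 2 = b ^ 2) →
      (∀ t, a1 t * b1 t + a2 t * b2 t + a3 t * b3 t = 0) →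
      ∀ t t' : ℝ,
        Gfun a b ((ω1 t, ω2 t, ω3 t), (a1 t, a2 t, a3 t), (b1 t, b2 t, b3 t))
          = Gfun a b ((ω1 t', ω2 t', ω3 t'), (a1 t', a2 t', a3 t'), (b1 t', b2 t', b3 t'))) := by
  refine ⟨fun v hα hβ hαβ =>
    (fderiv_Gfun_apply a b v _).trans (GfunDeriv_kowField_eq_zero hα hβ hαβ), ?_⟩
  intro ω1 ω2 ω3 a1 a2 a3 b1 b2 b3 hsol hα hβ hαβ t t'
  have hG : ∀ s, HasDerivAt (fun r => Gfun a b
      ((ω1 r, ω2 r, ω3 r), (a1 r, a2 r, a3 r), (b1 r, b2 r, b3 r))) 0 s := fun s => by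
    refine (hasDerivAt_Gfun_comp a b (hsol.hasDerivAt s)).congr_deriv
      (GfunDeriv_kowField_eq_zero ?_ ?_ ?_)
    · dsimp only [dot3]; linear_combination hα s
    · dsimp only [dot3]; linear_combination hβ s
    · exact hαβ s
  exact is_const_of_deriv_eq_zero (fun s => (hG s).differentiableAt) (fun s => (hG s).deriv) t t'

/-- On the constraint set `|α|² = a²`, `|β|² = b²`, `α·β = 0`, the directional derivative
of `G` along the Kowalevski vector field vanishes; consequently `G` is constant along
every solution lying on this constraint set. -/
theorem G_first_integral_on_constraints (a b : ℝ) (hab : b < a) (hb : 0 < b) :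
    (∀ v : (ℝ × ℝ × ℝ) × (ℝ × ℝ × ℝ) × (ℝ × ℝ × ℝ),
      dot3 v.2.1 v.2.1 = a ^ 2 → dot3 v.2.2 v.2.2 = b ^ 2 → dot3 v.2.1 v.2.2 = 0 →
      fderiv ℝ (Gfun a b) v (kowField v) = 0) ∧
    (∀ ω1 ω2 ω3 a1 a2 a3 b1 b2 b3 : ℝ → ℝ,
      KowSol ω1 ω2 ω3 a1 a2 a3 b1 b2 b3 →
      (∀ t, a1 t ^ 2 + a2 t ^ 2 + a3 t ^ 2 = a ^ 2) →
      (∀ t, b1 t ^ 2 + b2 t ^ 2 + b3 t ^ 2 = b ^ 2) →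
      (∀ t, a1 t * b1 t + a2 t * b2 t + a3 t * b3 t = 0) →
      ∀ t t' : ℝ,
        Gfun a b ((ω1 t, ω2 t, ω3 t), (a1 t, a2 t, a3 t), (b1 t, b2 t, b3 t))
          = Gfun a b ((ω1 t', ω2 t', ω3 t'), (a1 t', a2 t', a3 t'), (b1 t', b2 t', b3 t'))) :=
  G_first_integral_on_constraints_general a b
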